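/- arXiv:1309.2605 — 3 statements merged into one kernel-verified Lean document; each statement's English description precedes it below -/
import Mathlib

section
/- Suppose N is a function assigning to each pair (n, D), where n is a positive integer and D ∈ ℤ[x₁,…,xₙ], a natural number such that whenever the set of integer solutions of D(x₁,…,xₙ) = 0 is finite, N(n, D) is strictly greater than the number of integer solutions. For D ∈ ℤ[x₁,…,xₙ] let D* denote the polynomial in n+8 variables given by D*(x₁,…,xₙ,s₁,…,s₄,t₁,…,t₄) = D(x₁,…,xₙ)² + (x₁²+…+xₙ² − s₁²−s₂²−s₃²−s₄² − t₁²−t₂²−t₃²−t₄²)². Then for every n and every D ∈ ℤ[x₁,…,xₙ] whose set of integer solutions is finite, N(n+8, D*) is strictly greater than the height of every integer solution of D(x₁,…,xₙ) = 0. -/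
/-!
If `D` has finitely many integer zeros, so does `D*`: its zeros are the tuples `(x, s, t)` with
`D x = 0` and `‖(s, t)‖² = ‖x‖²`, and each sphere of integer points is finite. Conversely, over a
zero `x` of `D` with `m = ‖x‖²`, Lagrange's four-square theorem gives, for each `k ≤ m`, a point
`(s, t)` with `‖s‖² = k` and `‖t‖² = m - k`, so `D*` has at least `m + 1 ≥ |xᵢ| + 1` zeros.
-/

open MvPolynomial

/-- The polynomial `D*` of the statement, with `k` auxiliary variables instead of eight. -/
noncomputable def sumSqLift (n k : ℕ) (D : MvPolynomial (Fin n) ℤ) :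
    MvPolynomial (Fin (n + k)) ℤ :=
  rename (Fin.castAdd k) D ^ 2 +
    (∑ i : Fin n, X (Fin.castAdd k i) ^ 2 - ∑ j : Fin k, X (Fin.natAdd n j) ^ 2) ^ 2

theorem finite_setOf_sum_sq_eq (κ : Type*) [Fintype κ] (m : ℤ) :
    {s : κ → ℤ | ∑ j, s j ^ 2 = m}.Finite := by
  refine (Set.Finite.pi' fun _ => Set.finite_Icc (-m) m).subset fun s hs j => ?_
  have : |s j| ≤ m := calc
    |s j| ≤ s j ^ 2 := Int.natCast_natAbs (s j) ▸ Int.natAbs_le_self_sq (s j)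
    _ ≤ ∑ j, s j ^ 2 := Finset.single_le_sum (fun j _ => sq_nonneg (s j)) (Finset.mem_univ j)
    _ = m := hs
  exact abs_le.mp this

theorem exists_fin_four_sum_sq_eq (k : ℕ) : ∃ v : Fin 4 → ℤ, ∑ j, v j ^ 2 = k := by
  obtain ⟨a, b, c, d, h⟩ := Nat.sum_four_squares k
  exact ⟨![a, b, c, d], by simp [Fin.sum_univ_four, ← h]⟩

theorem succ_le_ncard_setOf_sum_eight_sq_eq (m : ℕ) :
    m + 1 ≤ {s : Fin (4 + 4) → ℤ | ∑ j, s j ^ 2 = m}.ncard := by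
  choose r hr using exists_fin_four_sum_sq_eq
  rw [← Set.ncard_Iic_nat m]
  refine Set.ncard_le_ncard_of_injOn (fun k => Fin.append (r k) (r (m - k))) ?_ ?_
    (finite_setOf_sum_sq_eq _ _)
  · intro k hk
    simp only [Set.mem_ofPred_eq, Fin.sum_univ_add, Fin.append_left, Fin.append_right, hr]
    push_cast [Set.mem_Iic.mp hk]
    ring
  · intro k _ k' _ h
    have : r k = r k' := funext fun j => by simpa using congrFun h (Fin.castAdd 4 j)
    exact_mod_cast (hr k).symm.trans (this ▸ hr k')

variable {n k : ℕ} {D : MvPolynomial (Fin n) ℤ}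

theorem eval_sumSqLift_eq_zero_iff (y : Fin (n + k) → ℤ) :
    eval y (sumSqLift n k D) = 0 ↔
      eval (fun i => y (Fin.castAdd k i)) D = 0 ∧
        ∑ j, y (Fin.natAdd n j) ^ 2 = ∑ i, y (Fin.castAdd k i) ^ 2 := by
  simp only [sumSqLift, map_add, map_pow, map_sub, map_sum, eval_X, eval_rename]
  rw [add_eq_zero_iff_of_nonneg (sq_nonneg _) (sq_nonneg _), sq_eq_zero_iff, sq_eq_zero_iff,
    sub_eq_zero, eq_comm (a := ∑ i : Fin n, _)]
  rfl

theorem finite_setOf_eval_sumSqLift_eq_zero (hD : {x : Fin n → ℤ | eval x D = 0}.Finite) :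
    {y : Fin (n + k) → ℤ | eval y (sumSqLift n k D) = 0}.Finite := by
  have hpairs : {p : (Fin n → ℤ) × (Fin k → ℤ) |
      eval p.1 D = 0 ∧ ∑ j, p.2 j ^ 2 = ∑ i, p.1 i ^ 2}.Finite :=
    (hD.prod (hD.biUnion fun x _ => finite_setOf_sum_sq_eq (Fin k) (∑ i, x i ^ 2))).subset
      fun p hp => ⟨hp.1, Set.mem_biUnion hp.1 hp.2⟩
  convert hpairs.preimage (Fin.appendEquiv n k).symm.injective.injOn using 1
  ext y
  simp [eval_sumSqLift_eq_zero_iff]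

theorem ncard_setOf_sum_sq_eq_le_ncard_sumSqLift_zeros {x : Fin n → ℤ} (hx : eval x D = 0)
    (hD : {x : Fin n → ℤ | eval x D = 0}.Finite) :
    {s : Fin k → ℤ | ∑ j, s j ^ 2 = ∑ i, x i ^ 2}.ncard ≤
      {y : Fin (n + k) → ℤ | eval y (sumSqLift n k D) = 0}.ncard := by
  refine Set.ncard_le_ncard_of_injOn (Fin.append x) (fun s hs => ?_) ?_
    (finite_setOf_eval_sumSqLift_eq_zero hD)
  · simpa [eval_sumSqLift_eq_zero_iff, hx] using hs
  · intro s _ s' _ h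
    funext j
    simpa using congrFun h (Fin.natAdd n j)

/-- If `N` bounds (strictly) the number of integer solutions of every
Diophantine equation with finitely many integer solutions, then `N (n+8) D*` strictly
bounds the height of every integer solution of `D = 0`, where
`D* = D² + (x₁²+…+xₙ² − s₁²−…−s₄² − t₁²−…−t₄²)²`. -/
theorem stmt1
    (N : (n : ℕ) → MvPolynomial (Fin n) ℤ → ℕ)
    (hN : ∀ n : ℕ, 0 < n → ∀ D : MvPolynomial (Fin n) ℤ,
      {x : Fin n → ℤ | eval x D = 0}.Finite →
      {x : Fin n → ℤ | eval x D = 0}.ncard < N n D) :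
    ∀ n : ℕ, 0 < n → ∀ D : MvPolynomial (Fin n) ℤ,
      {x : Fin n → ℤ | eval x D = 0}.Finite →
      ∀ x : Fin n → ℤ, eval x D = 0 → ∀ i : Fin n,
        (x i).natAbs <
          N (n + 8)
            ((rename (Fin.castAdd 8) D) ^ 2 +
              ((∑ i : Fin n, (X (Fin.castAdd 8 i) : MvPolynomial (Fin (n + 8)) ℤ) ^ 2) -
                ∑ j : Fin 8, (X (Fin.natAdd n j) : MvPolynomial (Fin (n + 8)) ℤ) ^ 2) ^ 2) := by
  intro n _ D hD x hx i
  set m := ∑ i, (x i).natAbs ^ 2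
  have hm : (m : ℤ) = ∑ i, x i ^ 2 := by push_cast [m, Int.natCast_natAbs, sq_abs]; rfl
  calc (x i).natAbs ≤ m := (Nat.le_self_pow two_ne_zero _).trans
        (Finset.single_le_sum (f := fun j => (x j).natAbs ^ 2) (by simp) (Finset.mem_univ i))
    _ < {s : Fin 8 → ℤ | ∑ j, s j ^ 2 = m}.ncard := succ_le_ncard_setOf_sum_eight_sq_eq m
    _ ≤ {y : Fin (n + 8) → ℤ | eval y (sumSqLift n 8 D) = 0}.ncard :=
        hm ▸ ncard_setOf_sum_sq_eq_le_ncard_sumSqLift_zeros hx hD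
    _ < N (n + 8) (sumSqLift n 8 D) :=
        hN (n + 8) (Nat.succ_pos _) _ (finite_setOf_eval_sumSqLift_eq_zero hD)
end

section
/- For each integer n ≥ 2, f(n+1) ≥ f(n)² and f(n)² > f(n). -/
/-- A system `S ⊆ E_n`, encoded by the set `eqOne` of indices `i` carrying the
equation `x_i = 1`, and the sets `addEq`, `mulEq` of triples `(i, j, k)` carrying
the equations `x_i + x_j = x_k` and `x_i · x_j = x_k` respectively. -/
structure SystemEn (n : ℕ) where
  eqOne : Finset (Fin n)
  addEq : Finset (Fin n × Fin n × Fin n)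
  mulEq : Finset (Fin n × Fin n × Fin n)

/-- A tuple `x` solves the system `S` if it satisfies all equations of `S`. -/
def SystemEn.Solves {n : ℕ} {R : Type*} [Semiring R] (S : SystemEn n) (x : Fin n → R) : Prop :=
  (∀ i ∈ S.eqOne, x i = 1) ∧
  (∀ t ∈ S.addEq, x t.1 + x t.2.1 = x t.2.2) ∧
  (∀ t ∈ S.mulEq, x t.1 * x t.2.1 = x t.2.2)

/-- `fBound n` is the smallest non-negative integer `b` such that for each system
`S ⊆ E_n` with a finite number of solutions in integers `x₁, …, xₙ`, all these
solutions belong to `[-b, b]ⁿ`. -/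
noncomputable def fBound (n : ℕ) : ℕ :=
  sInf {b : ℕ | ∀ S : SystemEn n, {x : Fin n → ℤ | S.Solves x}.Finite →
    ∀ x : Fin n → ℤ, S.Solves x → ∀ i, |x i| ≤ (b : ℤ)}

/-- `gBound n` is the greatest finite total number of solutions of a subsystem of
`E_n` in integers `x₁, …, xₙ`. -/
noncomputable def gBound (n : ℕ) : ℕ :=
  sSup {c : ℕ | ∃ S : SystemEn n, {x : Fin n → ℤ | S.Solves x}.Finite ∧
    {x : Fin n → ℤ | S.Solves x}.ncard = c}

/-!
If `S` has finitely many solutions and one of them has `|x_i| ≥ f(n)`, adjoining a new variable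
with the equation `x_i · x_i = x_{n+1}` keeps the solution set finite (the new variable is
determined by the old ones) and produces a solution with `|x_{n+1}| ≥ f(n)²`; hence
`f(n+1) ≥ f(n)²`. The system `x_1 = ⋯ = x_{n-1} = 1, x_1 + x_1 = x_n` has the single solution
`(1, …, 1, 2)`, so `f(n) ≥ 2` and therefore `f(n)² > f(n)`.
-/

namespace SystemEn

variable {n : ℕ}

instance : Finite (SystemEn n) :=
  Finite.of_injective (fun S : SystemEn n => (S.eqOne, S.addEq, S.mulEq)) fun S T h => by
    cases S; cases T; simp_all

def solutions (S : SystemEn n) : Set (Fin n → ℤ) := {x | S.Solves x}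

@[simp]
theorem mem_solutions {S : SystemEn n} {x : Fin n → ℤ} : x ∈ S.solutions ↔ S.Solves x := Iff.rfl

theorem exists_natAbs_le_of_finite {S : SystemEn n} (hS : S.solutions.Finite) :
    ∃ b : ℕ, ∀ x ∈ S.solutions, ∀ i, (x i).natAbs ≤ b := by
  obtain ⟨b, hb⟩ := (hS.image fun x => Finset.univ.sup fun i => (x i).natAbs).bddAbove
  exact ⟨b, fun x hx i => (Finset.le_sup (f := fun i => (x i).natAbs) (Finset.mem_univ i)).trans
    (hb ⟨x, hx, rfl⟩)⟩

def allOne (n : ℕ) : SystemEn n := ⟨Finset.univ, ∅, ∅⟩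

theorem solutions_allOne : (allOne n).solutions = {1} := by
  ext x
  simp [allOne, Solves, funext_iff]

/-- The system `S` read in `n + 1` variables, the last one unconstrained. -/
def castSucc (S : SystemEn n) : SystemEn (n + 1) where
  eqOne := S.eqOne.image Fin.castSucc
  addEq := S.addEq.image fun t => (t.1.castSucc, t.2.1.castSucc, t.2.2.castSucc)
  mulEq := S.mulEq.image fun t => (t.1.castSucc, t.2.1.castSucc, t.2.2.castSucc)

def snocAdd (S : SystemEn n) (i j : Fin n) : SystemEn (n + 1) :=
  { S.castSucc with addEq := insert (i.castSucc, j.castSucc, Fin.last n) S.castSucc.addEq }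

def snocMul (S : SystemEn n) (i j : Fin n) : SystemEn (n + 1) :=
  { S.castSucc with mulEq := insert (i.castSucc, j.castSucc, Fin.last n) S.castSucc.mulEq }

theorem solves_snocAdd_iff {S : SystemEn n} {i j : Fin n} {y : Fin (n + 1) → ℤ} :
    (S.snocAdd i j).Solves y ↔
      S.Solves (Fin.init y) ∧ y (Fin.last n) = Fin.init y i + Fin.init y j := by
  simp only [Solves, snocAdd, castSucc, Finset.forall_mem_image, Finset.forall_mem_insert,
    Fin.init]
  tauto

theorem solves_snocMul_iff {S : SystemEn n} {i j : Fin n} {y : Fin (n + 1) → ℤ} :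
    (S.snocMul i j).Solves y ↔
      S.Solves (Fin.init y) ∧ y (Fin.last n) = Fin.init y i * Fin.init y j := by
  simp only [Solves, snocMul, castSucc, Finset.forall_mem_image, Finset.forall_mem_insert,
    Fin.init]
  tauto

theorem solutions_eq_image_snoc {S : SystemEn n} {S' : SystemEn (n + 1)}
    (g : (Fin n → ℤ) → ℤ)
    (h : ∀ y, S'.Solves y ↔ S.Solves (Fin.init y) ∧ y (Fin.last n) = g (Fin.init y)) :
    S'.solutions = (fun x => Fin.snoc x (g x)) '' S.solutions := by
  ext y
  simp only [mem_solutions, h, Set.mem_image]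
  constructor
  · rintro ⟨hS, hlast⟩
    exact ⟨Fin.init y, hS, by rw [← hlast, Fin.snoc_init_self]⟩
  · rintro ⟨x, hx, rfl⟩
    simp [Fin.init_snoc, hx]

theorem solutions_snocAdd (S : SystemEn n) (i j : Fin n) :
    (S.snocAdd i j).solutions = (fun x => Fin.snoc x (x i + x j)) '' S.solutions :=
  solutions_eq_image_snoc (fun x => x i + x j) fun _ => solves_snocAdd_iff

theorem solutions_snocMul (S : SystemEn n) (i j : Fin n) :
    (S.snocMul i j).solutions = (fun x => Fin.snoc x (x i * x j)) '' S.solutions :=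
  solutions_eq_image_snoc (fun x => x i * x j) fun _ => solves_snocMul_iff

end SystemEn

open SystemEn

def BoundsFiniteSolutions (n b : ℕ) : Prop :=
  ∀ S : SystemEn n, S.solutions.Finite → ∀ x ∈ S.solutions, ∀ i, |x i| ≤ (b : ℤ)

theorem fBound_eq_sInf (n : ℕ) : fBound n = sInf {b | BoundsFiniteSolutions n b} := rfl

theorem exists_boundsFiniteSolutions (n : ℕ) : ∃ b, BoundsFiniteSolutions n b := by
  have hS (S : SystemEn n) :
      ∃ b : ℕ, S.solutions.Finite → ∀ x ∈ S.solutions, ∀ i, (x i).natAbs ≤ b := by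
    by_cases h : S.solutions.Finite
    · exact (exists_natAbs_le_of_finite h).imp fun _ hb _ => hb
    · exact ⟨0, fun h' => absurd h' h⟩
  choose B hB using hS
  obtain ⟨b, hb⟩ := (Set.finite_range B).bddAbove
  refine ⟨b, fun S hfin x hx i => ?_⟩
  rw [Int.abs_eq_natAbs]
  exact_mod_cast (hB S hfin x hx i).trans (hb ⟨S, rfl⟩)

theorem boundsFiniteSolutions_fBound (n : ℕ) : BoundsFiniteSolutions n (fBound n) :=
  Nat.sInf_mem (exists_boundsFiniteSolutions n)

theorem abs_le_fBound {n : ℕ} {S : SystemEn n} (hS : S.solutions.Finite) {x : Fin n → ℤ}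
    (hx : x ∈ S.solutions) (i : Fin n) : |x i| ≤ fBound n :=
  boundsFiniteSolutions_fBound n S hS x hx i

theorem exists_fBound_le_abs {n : ℕ} (h : 0 < fBound n) :
    ∃ S : SystemEn n, S.solutions.Finite ∧ ∃ x ∈ S.solutions, ∃ i, (fBound n : ℤ) ≤ |x i| := by
  have hlt : fBound n - 1 ∉ {b | BoundsFiniteSolutions n b} :=
    Nat.notMem_of_lt_sInf (by rw [← fBound_eq_sInf]; omega)
  simp only [Set.mem_ofPred_eq, BoundsFiniteSolutions, not_forall, not_le] at hlt
  obtain ⟨S, hS, x, hx, i, hi⟩ := hlt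
  exact ⟨S, hS, x, hx, i, by push_cast [Nat.one_le_iff_ne_zero.2 h.ne'] at hi; omega⟩

theorem two_le_fBound {n : ℕ} (hn : 2 ≤ n) : 2 ≤ fBound n := by
  obtain ⟨m, rfl⟩ := Nat.exists_eq_add_of_le' hn
  have hsol : ((allOne (m + 1)).snocAdd 0 0).solutions = {Fin.snoc 1 2} := by
    rw [solutions_snocAdd, solutions_allOne, Set.image_singleton]
    norm_num
  have := abs_le_fBound (by rw [hsol]; exact Set.finite_singleton _)
    (hsol ▸ Set.mem_singleton _) (Fin.last _)
  simpa using this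

theorem sq_le_fBound_succ (n : ℕ) : fBound n ^ 2 ≤ fBound (n + 1) := by
  rcases Nat.eq_zero_or_pos (fBound n) with h | h
  · simp [h]
  obtain ⟨S, hS, x, hx, i, hi⟩ := exists_fBound_le_abs h
  have hfin : (S.snocMul i i).solutions.Finite := by
    rw [solutions_snocMul]; exact hS.image _
  have hsq := abs_le_fBound hfin (by rw [solutions_snocMul]; exact ⟨x, hx, rfl⟩) (Fin.last n)
  simp only [Fin.snoc_last, abs_mul] at hsq
  have : ((fBound n ^ 2 : ℕ) : ℤ) ≤ fBound (n + 1) := by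
    push_cast; nlinarith [abs_nonneg (x i)]
  exact_mod_cast this

/-- for each integer `n ≥ 2`, `f(n+1) ≥ f(n)² > f(n)`. -/
theorem stmt3 (n : ℕ) (hn : 2 ≤ n) :
    fBound n ^ 2 ≤ fBound (n + 1) ∧ fBound n < fBound n ^ 2 := by
  have h2 := two_le_fBound hn
  exact ⟨sq_le_fBound_succ n, by nlinarith⟩
end

section
/- Let p be a positive integer and let D ∈ ℤ[x₁,…,x_p] be a polynomial with deg(D, x_i) ≥ 1 for each i ∈ {1,…,p}. Then there exist an integer n > p and a system T ⊆ E_n such that the projection (x₁,…,xₙ) ↦ (x₁,…,x_p) is a bijection from the set of tuples (x₁,…,xₙ) ∈ ℤⁿ solving T onto the set of tuples (x₁,…,x_p) ∈ ℤᵖ with D(x₁,…,x_p) = 0. In particular, the equation D(x₁,…,x_p) = 0 and the system T have the same number of solutions in integers. -/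
open MvPolynomial

inductive Eqn (V : Type*) where
  | one (i : V)
  | add (i j k : V)
  | mul (i j k : V)
  deriving DecidableEq

namespace Eqn

variable {V W R : Type*}

def Holds [Semiring R] (e : Eqn V) (y : V → R) : Prop :=
  match e with
  | one i => y i = 1
  | add i j k => y i + y j = y k
  | mul i j k => y i * y j = y k

def map (f : V → W) : Eqn V → Eqn W
  | one i => one (f i)
  | add i j k => add (f i) (f j) (f k)
  | mul i j k => mul (f i) (f j) (f k)

def vars : Eqn V → List V
  | one i => [i]
  | add i j k => [i, j, k]
  | mul i j k => [i, j, k]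

variable [Semiring R]

theorem holds_map (f : V → W) (e : Eqn V) (y : W → R) :
    (e.map f).Holds y ↔ e.Holds (y ∘ f) := by
  cases e <;> rfl

theorem holds_congr {e : Eqn V} {y y' : V → R} (h : ∀ v ∈ e.vars, y v = y' v) :
    e.Holds y ↔ e.Holds y' := by
  cases e <;> simp_all [vars, Holds]

theorem Holds.comp {R' F : Type*} [Semiring R'] [FunLike F R R'] [RingHomClass F R R']
    {e : Eqn V} {y : V → R} (h : e.Holds y) (φ : F) : e.Holds (φ ∘ y) := by
  cases e <;> simp only [Holds, Function.comp_apply] at h ⊢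
  · rw [h, map_one]
  · rw [← h, map_add]
  · rw [← h, map_mul]

end Eqn

def SystemEn.ofEqns {n : ℕ} (S : List (Eqn (Fin n))) : SystemEn n where
  eqOne := {i | Eqn.one i ∈ S}
  addEq := {t | Eqn.add t.1 t.2.1 t.2.2 ∈ S}
  mulEq := {t | Eqn.mul t.1 t.2.1 t.2.2 ∈ S}

theorem SystemEn.solves_ofEqns {n : ℕ} {R : Type*} [Semiring R] (S : List (Eqn (Fin n)))
    (z : Fin n → R) : (ofEqns S).Solves z ↔ ∀ e ∈ S, e.Holds z := by
  simp only [Solves, ofEqns, Finset.mem_filter, Finset.mem_univ, true_and, Prod.forall]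
  constructor
  · rintro ⟨h1, h2, h3⟩ (_ | _ | _) he
    exacts [h1 _ he, h2 _ _ _ he, h3 _ _ _ he]
  · intro h
    exact ⟨fun i hi => h _ hi, fun i j k hi => h _ hi, fun i j k hi => h _ hi⟩

section EvalSystem

variable {σ : Type*} (R : Type*) [CommRing R]

def Determined (S : List (Eqn (MvPolynomial σ ℤ))) (v : MvPolynomial σ ℤ) : Prop :=
  ∀ y : MvPolynomial σ ℤ → R, (∀ e ∈ S, e.Holds y) → y v = aeval (y ∘ X) v

def IsEvalSystem (S : List (Eqn (MvPolynomial σ ℤ))) : Prop :=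
  (∀ e ∈ S, e.Holds id) ∧ ∀ v ∈ S.flatMap Eqn.vars, Determined R S v

variable {R} {S S' : List (Eqn (MvPolynomial σ ℤ))} {i j k v : MvPolynomial σ ℤ}

theorem Determined.mono (h : Determined R S v) (hS : S ⊆ S') : Determined R S' v :=
  fun y hy => h y fun e he => hy e (hS he)

theorem determined_X (S : List (Eqn (MvPolynomial σ ℤ))) (a : σ) : Determined R S (X a) :=
  fun y _ => (aeval_X (R := ℤ) (y ∘ X) a).symm

theorem IsEvalSystem.determined (hS : IsEvalSystem R S) (hv : v ∈ S.flatMap Eqn.vars) :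
    Determined R S v :=
  hS.2 v hv

theorem IsEvalSystem.holds_aeval {R' : Type*} [CommRing R'] (hS : IsEvalSystem R S)
    (x : σ → R') : ∀ e ∈ S, e.Holds (aeval x) :=
  fun e he => (hS.1 e he).comp (aeval x)

theorem isEvalSystem_nil : IsEvalSystem R ([] : List (Eqn (MvPolynomial σ ℤ))) := by
  simp [IsEvalSystem]

theorem IsEvalSystem.append (hS : IsEvalSystem R S) (hS' : IsEvalSystem R S') :
    IsEvalSystem R (S ++ S') := by
  refine ⟨fun e he => ?_, fun v hv => ?_⟩
  · rcases List.mem_append.1 he with he | he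
    exacts [hS.1 e he, hS'.1 e he]
  · rcases List.mem_append.1 (List.flatMap_append ▸ hv) with hv | hv
    exacts [(hS.determined hv).mono (List.subset_append_left _ _),
      (hS'.determined hv).mono (List.subset_append_right _ _)]

theorem IsEvalSystem.determined_cons {e : Eqn (MvPolynomial σ ℤ)} (hS : IsEvalSystem R S)
    (hdet : ∀ v ∈ e.vars, Determined R (e :: S) v) :
    ∀ v ∈ (e :: S).flatMap Eqn.vars, Determined R (e :: S) v := by
  intro v hv
  rcases List.mem_append.1 (List.flatMap_cons ▸ hv) with hv | hv
  exacts [hdet v hv, (hS.determined hv).mono (List.subset_cons_self _ _)]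

theorem IsEvalSystem.cons {e : Eqn (MvPolynomial σ ℤ)} (hS : IsEvalSystem R S) (he : e.Holds id)
    (hdet : ∀ v ∈ e.vars, Determined R (e :: S) v) : IsEvalSystem R (e :: S) :=
  ⟨List.forall_mem_cons.2 ⟨he, hS.1⟩, hS.determined_cons hdet⟩

theorem IsEvalSystem.cons_one (hS : IsEvalSystem R S) : IsEvalSystem R (.one 1 :: S) := by
  refine hS.cons rfl ?_
  simp only [Eqn.vars, List.mem_singleton, forall_eq]
  intro y hy
  rw [hy _ List.mem_cons_self, map_one]

theorem IsEvalSystem.cons_add (hS : IsEvalSystem R S) (hi : Determined R S i)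
    (hj : Determined R S j) : IsEvalSystem R (.add i j (i + j) :: S) := by
  have hi' := hi.mono (List.subset_cons_self (.add i j (i + j)) S)
  have hj' := hj.mono (List.subset_cons_self (.add i j (i + j)) S)
  refine hS.cons rfl ?_
  simp only [Eqn.vars, List.mem_cons, List.not_mem_nil, or_false, forall_eq_or_imp, forall_eq]
  refine ⟨hi', hj', fun y hy => ?_⟩
  rw [← (hy _ List.mem_cons_self : y i + y j = y (i + j)), hi' y hy, hj' y hy, map_add]

theorem IsEvalSystem.cons_mul (hS : IsEvalSystem R S) (hi : Determined R S i)
    (hj : Determined R S j) : IsEvalSystem R (.mul i j (i * j) :: S) := by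
  have hi' := hi.mono (List.subset_cons_self (.mul i j (i * j)) S)
  have hj' := hj.mono (List.subset_cons_self (.mul i j (i * j)) S)
  refine hS.cons rfl ?_
  simp only [Eqn.vars, List.mem_cons, List.not_mem_nil, or_false, forall_eq_or_imp, forall_eq]
  refine ⟨hi', hj', fun y hy => ?_⟩
  rw [← (hy _ List.mem_cons_self : y i * y j = y (i * j)), hi' y hy, hj' y hy, map_mul]

theorem IsEvalSystem.cons_sub (hS : IsEvalSystem R S) (hj : Determined R S j)
    (hk : Determined R S k) : IsEvalSystem R (.add (k - j) j k :: S) := by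
  have hj' := hj.mono (List.subset_cons_self (.add (k - j) j k) S)
  have hk' := hk.mono (List.subset_cons_self (.add (k - j) j k) S)
  refine hS.cons (sub_add_cancel k j) ?_
  simp only [Eqn.vars, List.mem_cons, List.not_mem_nil, or_false, forall_eq_or_imp, forall_eq]
  refine ⟨fun y hy => ?_, hj', hk'⟩
  rw [eq_sub_of_add_eq (hy _ List.mem_cons_self : y (k - j) + y j = y k), hj' y hy, hk' y hy,
    map_sub]

variable (R) in
theorem exists_isEvalSystem_C (a : ℤ) :
    ∃ S : List (Eqn (MvPolynomial σ ℤ)),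
      IsEvalSystem R S ∧ Determined R S 1 ∧ Determined R S (C a) := by
  induction a using Int.induction_on with
  | zero =>
    have h := isEvalSystem_nil.cons_one (R := R) (σ := σ)
    have h1 := h.determined (v := 1) (by simp [Eqn.vars])
    refine ⟨_, h.cons_sub h1 h1, h1.mono (List.subset_cons_self _ _), ?_⟩
    rw [C_0, ← sub_self 1]
    exact (h.cons_sub h1 h1).determined (by simp [Eqn.vars])
  | succ a ih =>
    obtain ⟨S, hS, h1, ha⟩ := ih
    refine ⟨_, hS.cons_add ha h1, h1.mono (List.subset_cons_self _ _), ?_⟩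
    rw [C_add, C_1]
    exact (hS.cons_add ha h1).determined (by simp [Eqn.vars])
  | pred a ih =>
    obtain ⟨S, hS, h1, ha⟩ := ih
    refine ⟨_, hS.cons_sub h1 ha, h1.mono (List.subset_cons_self _ _), ?_⟩
    rw [C_sub, C_1]
    exact (hS.cons_sub h1 ha).determined (by simp [Eqn.vars])

variable (R) in
theorem exists_isEvalSystem (Q : MvPolynomial σ ℤ) :
    ∃ S : List (Eqn (MvPolynomial σ ℤ)), IsEvalSystem R S ∧ Determined R S Q := by
  induction Q using MvPolynomial.induction_on with
  | C a =>
    obtain ⟨S, hS, -, ha⟩ := exists_isEvalSystem_C R a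
    exact ⟨S, hS, ha⟩
  | add P Q hP hQ =>
    obtain ⟨SP, hSP, hP⟩ := hP
    obtain ⟨SQ, hSQ, hQ⟩ := hQ
    have h := (hSP.append hSQ).cons_add (hP.mono (List.subset_append_left _ _))
      (hQ.mono (List.subset_append_right _ _))
    exact ⟨_, h, h.determined (by simp [Eqn.vars])⟩
  | mul_X P a hP =>
    obtain ⟨S, hS, hP⟩ := hP
    have h := hS.cons_mul hP (determined_X S a)
    exact ⟨_, h, h.determined (by simp [Eqn.vars])⟩

end EvalSystem

section Transfer

open Function

theorem exists_injective_append {V : Type*} {p : ℕ} (f : Fin p → V) (hf : Injective f)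
    (U : Finset V) :
    ∃ (k : ℕ) (g : Fin k → V),
      Injective (Fin.append f g) ∧ Set.range g = ↑U \ Set.range f := by
  classical
  let W := U.filter (· ∉ Set.range f)
  refine ⟨W.card, fun j => W.equivFin.symm j, ?_, ?_⟩
  · refine Fin.append_injective_iff.2
      ⟨hf, Subtype.val_injective.comp W.equivFin.symm.injective, fun i j h => ?_⟩
    exact (Finset.mem_filter.1 (W.equivFin.symm j).2).2 ⟨i, h⟩
  · ext v
    constructor
    · rintro ⟨j, rfl⟩
      exact Finset.mem_filter.1 (W.equivFin.symm j).2
    · intro hv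
      exact ⟨W.equivFin ⟨v, Finset.mem_filter.2 hv⟩, by simp⟩

variable {p : ℕ} {R : Type*} [CommRing R]

theorem bijOn_solves_ofEqns {n : ℕ} [Nonempty (Fin n)] (S : List (Eqn (MvPolynomial (Fin p) ℤ)))
    (σ : Fin n → MvPolynomial (Fin p) ℤ) (hσ : Injective σ)
    (hvars : ∀ v ∈ S.flatMap Eqn.vars, v ∈ Set.range σ) (hdet : ∀ j, Determined R S (σ j))
    (ι : Fin p → Fin n) (hι : ∀ i, σ (ι i) = X i) :
    Set.BijOn (fun z : Fin n → R => z ∘ ι)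
      {z | (SystemEn.ofEqns (S.map (Eqn.map (invFun σ)))).Solves z}
      {x : Fin p → R | ∀ e ∈ S, e.Holds (aeval x)} := by
  have hinv_σ : ∀ j, invFun σ (σ j) = j := leftInverse_invFun hσ
  have hσ_inv : ∀ e ∈ S, ∀ v ∈ e.vars, σ (invFun σ v) = v := fun e he v hv =>
    invFun_eq (hvars v (List.mem_flatMap.2 ⟨e, he, hv⟩))
  have hsolves : ∀ z : Fin n → R,
      (SystemEn.ofEqns (S.map (Eqn.map (invFun σ)))).Solves z ↔
        ∀ e ∈ S, e.Holds (z ∘ invFun σ) := by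
    simp only [SystemEn.solves_ofEqns, List.forall_mem_map, Eqn.holds_map, implies_true]
  have hval : ∀ z : Fin n → R, (∀ e ∈ S, e.Holds (z ∘ invFun σ)) →
      ∀ j, z j = aeval (z ∘ ι) (σ j) := by
    intro z hz j
    have hproj : z ∘ ι = (z ∘ invFun σ) ∘ X :=
      funext fun i => by simp only [comp_apply, ← hι, hinv_σ]
    rw [hproj, ← hdet j _ hz, comp_apply, hinv_σ]
  refine ⟨fun z hz e he => ?_, fun z hz z' hz' h => ?_, fun x hx => ?_⟩
  · replace hz := (hsolves z).1 hz
    refine (Eqn.holds_congr fun v hv => ?_).1 (hz e he)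
    rw [comp_apply, hval z hz, hσ_inv e he v hv]
  · funext j
    rw [hval z ((hsolves z).1 hz), hval z' ((hsolves z').1 hz'), show z ∘ ι = z' ∘ ι from h]
  · refine ⟨fun j => aeval x (σ j), ?_, funext fun i => by simp [hι]⟩
    refine (hsolves _).2 fun e he => ?_
    refine (Eqn.holds_congr fun v hv => ?_).2 (hx e he)
    rw [comp_apply, hσ_inv e he v hv]

theorem exists_systemEn_bijOn (S : List (Eqn (MvPolynomial (Fin p) ℤ)))
    (hS : ∀ v ∈ S.flatMap Eqn.vars, Determined R S v)
    (hv : ∃ v ∈ S.flatMap Eqn.vars, v ∉ Set.range X) :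
    ∃ (n : ℕ) (h : p < n) (T : SystemEn n),
      Set.BijOn (fun z : Fin n → R => z ∘ Fin.castLE h.le) {z | T.Solves z}
        {x : Fin p → R | ∀ e ∈ S, e.Holds (aeval x)} := by
  classical
  obtain ⟨k, g, hinj, hg⟩ := exists_injective_append X X_injective (S.flatMap Eqn.vars).toFinset
  have hg' : ∀ v, v ∈ Set.range g ↔ v ∈ S.flatMap Eqn.vars ∧ v ∉ Set.range X := by
    simp [hg]
  obtain ⟨v₀, hv₀, hv₀X⟩ := hv
  obtain ⟨j₀, -⟩ := (hg' v₀).2 ⟨hv₀, hv₀X⟩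
  have : Nonempty (Fin (p + k)) := ⟨Fin.natAdd p j₀⟩
  refine ⟨p + k, by have := j₀.pos; omega, _,
    bijOn_solves_ofEqns S (Fin.append X g) hinj (fun v hv => ?vars) (Fin.addCases ?left ?right)
      _ ?castLE⟩
  case vars =>
    by_cases hvX : v ∈ Set.range X
    · obtain ⟨i, rfl⟩ := hvX
      exact ⟨Fin.castAdd k i, Fin.append_left X g i⟩
    · obtain ⟨j, rfl⟩ := (hg' v).2 ⟨hv, hvX⟩
      exact ⟨Fin.natAdd p j, Fin.append_right X g j⟩
  case left =>
    intro i
    rw [Fin.append_left]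
    exact determined_X S i
  case right =>
    intro j
    rw [Fin.append_right]
    exact hS _ ((hg' _).1 ⟨j, rfl⟩).1
  case castLE => exact Fin.append_left X g

end Transfer

theorem stmt8_general (p : ℕ) (D : MvPolynomial (Fin p) ℤ) :
    ∃ (n : ℕ) (h : p < n) (T : SystemEn n),
      Set.BijOn (fun x : Fin n → ℤ => x ∘ Fin.castLE h.le)
        {x : Fin n → ℤ | T.Solves x}
        {x : Fin p → ℤ | eval x D = 0} := by
  obtain ⟨S, hS, hD⟩ := exists_isEvalSystem ℤ D
  have hS₁ := hS.cons_one
  have hdet := hS₁.determined_cons (e := .add D 1 1) <| by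
    simp only [Eqn.vars, List.mem_cons, List.not_mem_nil, or_false, or_self, forall_eq_or_imp,
      forall_eq]
    exact ⟨hD.mono (List.subset_cons_of_subset _ (List.subset_cons_self _ _)),
      (hS₁.determined (by simp [Eqn.vars])).mono (List.subset_cons_self _ _)⟩
  have hX : (1 : MvPolynomial (Fin p) ℤ) ∉ Set.range X := by
    rintro ⟨i, hi⟩
    simpa using congrArg (eval 0) hi
  obtain ⟨n, hn, T, hT⟩ := exists_systemEn_bijOn _ hdet ⟨1, by simp [Eqn.vars], hX⟩
  refine ⟨n, hn, T, ?_⟩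
  convert hT using 1
  refine Set.ext fun x => ⟨fun h => List.forall_mem_cons.2 ⟨?_, hS₁.holds_aeval x⟩,
    fun h => add_eq_right.1 (h _ List.mem_cons_self)⟩
  change aeval x D + aeval x 1 = aeval x 1
  rw [show aeval x D = 0 from h, zero_add]

/-- for a polynomial `D ∈ ℤ[x₁,…,x_p]` of degree `≥ 1` in each variable,
there are `n > p` and a system `T ⊆ E_n` such that projecting to the first `p`
coordinates is a bijection from the integer solutions of `T` onto the integer
solutions of `D = 0`. -/
theorem stmt8 (p : ℕ) (hp : 0 < p) (D : MvPolynomial (Fin p) ℤ)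
    (hdeg : ∀ i : Fin p, 1 ≤ degreeOf i D) :
    ∃ (n : ℕ) (h : p < n) (T : SystemEn n),
      Set.BijOn (fun x : Fin n → ℤ => x ∘ Fin.castLE h.le)
        {x : Fin n → ℤ | T.Solves x}
        {x : Fin p → ℤ | eval x D = 0} :=
  stmt8_general p D
end
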